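/- Let Φ be a TH system on V with eigenvalue sequence {θ_i}, dual eigenvalue sequence {θ*_i}, split sequence {φ_i}. A sequence of vectors {v_i}_{i=0}^d in V, not all zero, is a Φ-split basis if and only if (i) v_d ∈ E_0 V and (ii) A* v_i = θ*_i v_i + v_{i-1} for 1 ≤ i ≤ d. -/

import Mathlib

/-- A thin Hessenberg system on `V`: multiplicity-free `A`, `Astar` with
orderings of primitive idempotents `E`, `Estar` (eigenvalues `θ`, `θs`)
satisfying the Hessenberg conditions. -/
structure THSystem (K V : Type*) [Field K] [AddCommGroup V] [Module K V] (d : ℕ) where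
  A : Module.End K V
  Astar : Module.End K V
  E : Fin (d + 1) → Module.End K V
  Estar : Fin (d + 1) → Module.End K V
  θ : Fin (d + 1) → K
  θs : Fin (d + 1) → K
  finrank_eq : Module.finrank K V = d + 1
  θ_inj : Function.Injective θ
  θs_inj : Function.Injective θs
  sum_E : ∑ i, E i = 1
  E_mul : ∀ i j, E i * E j = if i = j then E i else 0
  E_ne : ∀ i, E i ≠ 0
  sum_Es : ∑ i, Estar i = 1
  Es_mul : ∀ i j, Estar i * Estar j = if i = j then Estar i else 0
  Es_ne : ∀ i, Estar i ≠ 0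
  A_eq : A = ∑ i, θ i • E i
  As_eq : Astar = ∑ i, θs i • Estar i
  EAsE_zero : ∀ i j : Fin (d + 1), (j : ℕ) + 1 < (i : ℕ) → E i * Astar * E j = 0
  EAsE_ne : ∀ i j : Fin (d + 1), (i : ℕ) = (j : ℕ) + 1 → E i * Astar * E j ≠ 0
  EsAEs_zero : ∀ i j : Fin (d + 1), (j : ℕ) + 1 < (i : ℕ) → Estar i * A * Estar j = 0
  EsAEs_ne : ∀ i j : Fin (d + 1), (i : ℕ) = (j : ℕ) + 1 → Estar i * A * Estar j ≠ 0
/-- `v` has the form of a `Φ`-split basis: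
`v_d` is a nonzero element of `E_0 V` and `v_i = (A* - θ*_{i+1} I) v_{i+1}`. -/
def IsSplitFamily {K V : Type*} [Field K] [AddCommGroup V] [Module K V] {d : ℕ}
    (Φ : THSystem K V d) (v : Fin (d + 1) → V) : Prop :=
  v (Fin.last d) ≠ 0 ∧ v (Fin.last d) ∈ LinearMap.range (Φ.E 0) ∧
  ∀ i : ℕ, ∀ h : i < d, v ⟨i, by omega⟩ =
    (Φ.Astar - Φ.θs ⟨i + 1, by omega⟩ • (1 : Module.End K V)) (v ⟨i + 1, by omega⟩)

/-- A `Φ`-split basis for `V`. -/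
def IsSplitBasis {K V : Type*} [Field K] [AddCommGroup V] [Module K V] {d : ℕ}
    (Φ : THSystem K V d) (v : Fin (d + 1) → V) : Prop :=
  LinearIndependent K v ∧ Submodule.span K (Set.range v) = ⊤ ∧ IsSplitFamily Φ v

/-
The recurrence says `v_{i-1} = (A* - θ*_i) v_i`, so the content is that such a family started at
a nonzero `v_d ∈ E₀V` is a basis. Each `E_iV` is one-dimensional and `E_i A* E_j` vanishes for
`i > j + 1` but not for `i = j + 1`; hence `A* - θ*` carries a vector of `E₀V + ⋯ + E_kV` with
nonzero `E_k`-component to one of `E₀V + ⋯ + E_{k+1}V` with nonzero `E_{k+1}`-component. So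
`v_{d-k}` has leading component `E_k`, and a family that is triangular in this sense is linearly
independent; there are `d + 1 = dim V` of them. A zero `v_d` would force every `v_i` to vanish.
-/

open Module LinearMap

theorem linearIndependent_of_triangular {ι R V W : Type*} [LinearOrder ι] [Ring R] [IsDomain R]
    [AddCommGroup V] [Module R V] [AddCommGroup W] [Module R W] [Module.IsTorsionFree R W]
    {u : ι → V} (f : ι → V →ₗ[R] W) (hdiag : ∀ i, f i (u i) ≠ 0)
    (hlt : ∀ i j, i < j → f i (u j) = 0) : LinearIndependent R u := by
  rw [linearIndependent_iff]
  intro l hl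
  by_contra hl0
  have hne : l.support.Nonempty := Finsupp.support_nonempty_iff.2 hl0
  set i := l.support.min' hne
  have hi : i ∈ l.support := l.support.min'_mem hne
  have hfi : f i (Finsupp.linearCombination R u l) = l i • f i (u i) := by
    simp only [Finsupp.linearCombination_apply, Finsupp.sum, map_sum, map_smul]
    refine Finset.sum_eq_single i (fun j hj hji => ?_) (absurd hi)
    rw [hlt i j (lt_of_le_of_ne (l.support.min'_le j hj) (Ne.symm hji)), smul_zero]
  rw [hl, map_zero, eq_comm, smul_eq_zero] at hfi
  exact hfi.elim (Finsupp.mem_support_iff.1 hi) (hdiag i)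

namespace THSystem

variable {K V : Type*} [Field K] [AddCommGroup V] [Module K V] {d : ℕ}

lemma finiteDimensional (Φ : THSystem K V d) : FiniteDimensional K V :=
  FiniteDimensional.of_finrank_eq_succ Φ.finrank_eq

variable (Φ : THSystem K V d)

lemma E_apply_E (i j : Fin (d + 1)) (x : V) :
    Φ.E i (Φ.E j x) = if i = j then Φ.E i x else 0 := by
  rw [← Module.End.mul_apply, Φ.E_mul]
  split_ifs <;> rfl

lemma sum_E_apply (x : V) : ∑ i, Φ.E i x = x := by
  simpa using congr($(Φ.sum_E) x)

lemma range_E_le_eigenspace (i : Fin (d + 1)) : range (Φ.E i) ≤ Φ.A.eigenspace (Φ.θ i) := by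
  rintro _ ⟨x, rfl⟩
  simp [Φ.A_eq, Φ.E_apply_E]

lemma iSupIndep_range_E : iSupIndep fun i => range (Φ.E i) :=
  (Φ.A.eigenspaces_iSupIndep.comp Φ.θ_inj).mono Φ.range_E_le_eigenspace

lemma iSup_range_E : ⨆ i, range (Φ.E i) = ⊤ :=
  eq_top_iff.2 fun x _ => Φ.sum_E_apply x ▸
    Submodule.sum_mem _ fun i _ => Submodule.mem_iSup_of_mem i (mem_range_self _ x)

lemma sum_finrank_range_E : ∑ i, finrank K (range (Φ.E i)) = d + 1 := by
  have := Φ.finiteDimensional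
  have hint := DirectSum.isInternal_submodule_of_iSupIndep_of_iSup_eq_top
    Φ.iSupIndep_range_E Φ.iSup_range_E
  rw [← finrank_directSum, (LinearEquiv.ofBijective (DirectSum.coeLinearMap _) hint).finrank_eq,
    Φ.finrank_eq]

lemma finrank_range_E (i : Fin (d + 1)) : finrank K (range (Φ.E i)) = 1 := by
  have := Φ.finiteDimensional
  have hpos : ∀ j ∈ Finset.univ, 1 ≤ finrank K (range (Φ.E j)) := fun j _ =>
    Submodule.one_le_finrank_iff.2 fun h => Φ.E_ne j (range_eq_bot.1 h)
  refine ((Finset.sum_eq_sum_iff_of_le hpos).1 ?_ i (Finset.mem_univ i)).symm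
  simp [Φ.sum_finrank_range_E]

lemma exists_smul_eq {i : Fin (d + 1)} {x y : V} (hx : x ∈ range (Φ.E i)) (hx0 : x ≠ 0)
    (hy : y ∈ range (Φ.E i)) : ∃ c : K, c • x = y := by
  obtain ⟨c, hc⟩ := (finrank_eq_one_iff_of_nonzero' (⟨x, hx⟩ : range (Φ.E i))
    (by simpa using hx0)).1 (Φ.finrank_range_E i) ⟨y, hy⟩
  exact ⟨c, congr_arg Subtype.val hc⟩

lemma E_succ_Astar_ne_zero (k : Fin d) {x : V} (hx : x ∈ range (Φ.E k.castSucc))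
    (hx0 : x ≠ 0) : Φ.E k.succ (Φ.Astar x) ≠ 0 := by
  obtain ⟨z, hz⟩ := DFunLike.ne_iff.1 (Φ.EAsE_ne k.succ k.castSucc rfl)
  obtain ⟨c, hc⟩ := Φ.exists_smul_eq hx hx0 (mem_range_self _ z)
  intro h
  apply hz
  rw [Module.End.mul_apply, Module.End.mul_apply, ← hc, map_smul, map_smul, h, smul_zero]
  rfl

lemma E_Astar_eq_E_Astar_E {k j : Fin (d + 1)} {w : V} (hw : ∀ m, k < m → Φ.E m w = 0)
    (hkj : k < j) : Φ.E j (Φ.Astar w) = Φ.E j (Φ.Astar (Φ.E k w)) := by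
  conv_lhs => rw [← Φ.sum_E_apply w]
  rw [map_sum, map_sum, Finset.sum_eq_single k _ (by simp)]
  intro m _ hmk
  rcases lt_or_gt_of_ne hmk with hm | hm
  · exact LinearMap.congr_fun (Φ.EAsE_zero j m (by omega)) w
  · rw [hw m hm, map_zero, map_zero]

def HasLeadingComponent (k : Fin (d + 1)) (w : V) : Prop :=
  (∀ m, k < m → Φ.E m w = 0) ∧ Φ.E k w ≠ 0

lemma hasLeadingComponent_zero {x : V} (hx : x ∈ range (Φ.E 0)) (hx0 : x ≠ 0) :
    Φ.HasLeadingComponent 0 x := by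
  obtain ⟨y, rfl⟩ := hx
  refine ⟨fun m hm => ?_, ?_⟩
  · rw [E_apply_E, if_neg hm.ne']
  · rwa [E_apply_E, if_pos rfl]

variable {Φ}

lemma HasLeadingComponent.Astar_sub_smul {k : Fin d} {w : V}
    (h : Φ.HasLeadingComponent k.castSucc w) (c : K) :
    Φ.HasLeadingComponent k.succ (Φ.Astar w - c • w) := by
  have hE : ∀ j, k.castSucc < j →
      Φ.E j (Φ.Astar w - c • w) = Φ.E j (Φ.Astar (Φ.E k.castSucc w)) := fun j hj => by
    rw [map_sub, map_smul, h.1 j hj, smul_zero, sub_zero, Φ.E_Astar_eq_E_Astar_E h.1 hj]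
  refine ⟨fun m hm => ?_, ?_⟩
  · rw [hE m (Fin.castSucc_lt_succ.trans hm)]
    refine LinearMap.congr_fun (Φ.EAsE_zero m k.castSucc ?_) w
    simp only [Fin.lt_def, Fin.val_succ, Fin.val_castSucc] at hm ⊢
    omega
  · rw [hE _ Fin.castSucc_lt_succ]
    exact Φ.E_succ_Astar_ne_zero k (mem_range_self _ _) h.2

variable {v : Fin (d + 1) → V}

lemma hasLeadingComponent_rev
    (hrec : ∀ k : Fin d, v k.castSucc = Φ.Astar (v k.succ) - Φ.θs k.succ • v k.succ)
    (hlast : v (Fin.last d) ∈ range (Φ.E 0))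
    (hlast0 : v (Fin.last d) ≠ 0) (i : Fin (d + 1)) : Φ.HasLeadingComponent i.rev (v i) := by
  induction i using Fin.reverseInduction with
  | last => rw [Fin.rev_last]; exact Φ.hasLeadingComponent_zero hlast hlast0
  | cast k ih =>
    rw [Fin.rev_succ] at ih
    rw [Fin.rev_castSucc, hrec k]
    exact ih.Astar_sub_smul _

lemma eq_zero_of_last_eq_zero
    (hrec : ∀ k : Fin d, v k.castSucc = Φ.Astar (v k.succ) - Φ.θs k.succ • v k.succ)
    (hlast : v (Fin.last d) = 0) (i : Fin (d + 1)) : v i = 0 := by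
  induction i using Fin.reverseInduction with
  | last => exact hlast
  | cast k ih => rw [hrec k, ih, map_zero, smul_zero, sub_zero]

end THSystem

section SplitFamily

variable {K V : Type*} [Field K] [AddCommGroup V] [Module K V] {d : ℕ} {Φ : THSystem K V d}
  {v : Fin (d + 1) → V}

lemma isSplitFamily_iff : IsSplitFamily Φ v ↔ v (Fin.last d) ≠ 0 ∧
    v (Fin.last d) ∈ range (Φ.E 0) ∧
    ∀ k : Fin d, v k.castSucc = Φ.Astar (v k.succ) - Φ.θs k.succ • v k.succ := by
  simp only [IsSplitFamily, Fin.forall_iff, LinearMap.sub_apply, LinearMap.smul_apply,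
    Module.End.one_apply]
  rfl

lemma IsSplitFamily.linearIndependent (h : IsSplitFamily Φ v) : LinearIndependent K v := by
  obtain ⟨hlast0, hlast, hrec⟩ := isSplitFamily_iff.1 h
  have hlead := THSystem.hasLeadingComponent_rev hrec hlast hlast0
  exact linearIndependent_of_triangular (fun i => Φ.E i.rev) (fun i => (hlead i).2)
    fun i j hij => (hlead j).1 _ (Fin.rev_lt_rev.2 hij)

lemma isSplitBasis_iff_isSplitFamily : IsSplitBasis Φ v ↔ IsSplitFamily Φ v := by
  refine ⟨fun h => h.2.2, fun h => ⟨h.linearIndependent, ?_, h⟩⟩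
  exact h.linearIndependent.span_eq_top_of_card_eq_finrank
    (by rw [Fintype.card_fin, Φ.finrank_eq])

end SplitFamily

/-- Characterization of `Φ`-split bases: a family `v`, not all zero, is a
`Φ`-split basis iff `v_d ∈ E_0 V` and `A* v_i = θ*_i v_i + v_{i-1}` for `1 ≤ i ≤ d`. -/
theorem splitBasis_characterization {K V : Type*} [Field K] [AddCommGroup V] [Module K V]
    {d : ℕ} (Φ : THSystem K V d)
    (v : Fin (d + 1) → V) (hv : ∃ i, v i ≠ 0) :
    IsSplitBasis Φ v ↔
      (v (Fin.last d) ∈ LinearMap.range (Φ.E 0) ∧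
       ∀ i : ℕ, ∀ h1 : 1 ≤ i, ∀ hd : i ≤ d,
         Φ.Astar (v ⟨i, by omega⟩) =
           Φ.θs ⟨i, by omega⟩ • v ⟨i, by omega⟩ + v ⟨i - 1, by omega⟩) := by
  have hrec_iff : (∀ i : ℕ, ∀ h1 : 1 ≤ i, ∀ hd : i ≤ d,
      Φ.Astar (v ⟨i, by omega⟩) =
        Φ.θs ⟨i, by omega⟩ • v ⟨i, by omega⟩ + v ⟨i - 1, by omega⟩) ↔
      ∀ k : Fin d, v k.castSucc = Φ.Astar (v k.succ) - Φ.θs k.succ • v k.succ := by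
    refine ⟨fun h k => eq_sub_of_add_eq' (h (k + 1) (by omega) k.isLt).symm,
      fun h i h1 hd => ?_⟩
    obtain ⟨k, rfl⟩ : ∃ k, i = k + 1 := ⟨i - 1, by omega⟩
    exact (eq_sub_iff_add_eq'.1 (h ⟨k, hd⟩)).symm
  rw [isSplitBasis_iff_isSplitFamily, isSplitFamily_iff, hrec_iff]
  refine and_iff_right_of_imp fun ⟨_, hrec⟩ hlast => ?_
  obtain ⟨i, hi⟩ := hv
  exact hi (THSystem.eq_zero_of_last_eq_zero hrec hlast i)
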